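/- Let i, b be even nonnegative integers with i ≤ b−2. Let A be the square matrix of size (b−i)/2 whose rows are indexed by r ∈ {i+2, i+4, …, b} (in increasing order), whose columns are indexed by c ∈ {i, i+2, …, b−2} (in increasing order), and whose (r,c)-entry is α(r,c) := (−1)^{(r−c)/2} · r! / (((r−c)/2)! · c! · 2^{(r−c)/2}) if r ≥ c, and 0 if r < c. Then det(A) = (−1)^{(b−i)/2} · b! / (((b−i)/2)! · i! · 2^{(b−i)/2}). -/

import Mathlib

/-!
Writing `r = i + 2k` and `c = i + 2l`, the entry `α(r, c)` is `r! / c!` times the coefficient of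
`X^(k-l)` in `e^(-X/2)`. Scaling away the factorials, which telescope to `b! / i!`, leaves the
Hessenberg–Toeplitz matrix `(a_(t+1-s))` of the coefficients `a_m` of `e^(-X/2)`. It is the
lower-triangular Toeplitz matrix `T` of `e^(-X/2)` (of size `n + 1`) with its first row and last
column removed, so by the cofactor formula for the adjugate it equals `(-1)^n` times the corner
entry of `adj T = T⁻¹`. Since `e^(-X/2) e^(X/2) = 1`, `T⁻¹` is the Toeplitz matrix of
`e^(X/2)`, whose corner entry is `1 / (2^n n!)`.
-/

open Finset

/-- The entry `α(r,c) = (-1)^{(r-c)/2} · r! / (((r-c)/2)! · c! · 2^{(r-c)/2})` for `r ≥ c`,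
and `0` for `r < c`. -/
noncomputable def alphaEnt (r c : ℕ) : ℝ :=
  if c ≤ r then
    (-1 : ℝ) ^ ((r - c) / 2) * (Nat.factorial r) /
      ((Nat.factorial ((r - c) / 2)) * (Nat.factorial c) * 2 ^ ((r - c) / 2))
  else 0

namespace PowerSeries

variable {R : Type*} [CommRing R]

noncomputable def lowerToeplitz (f : R⟦X⟧) (n : ℕ) : Matrix (Fin n) (Fin n) R :=
  Matrix.of fun t s => if (s : ℕ) ≤ t then coeff (t - s : ℕ) f else 0

theorem lowerToeplitz_mul (f g : R⟦X⟧) (n : ℕ) :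
    lowerToeplitz f n * lowerToeplitz g n = lowerToeplitz (f * g) n := by
  ext t s
  simp only [lowerToeplitz, Matrix.mul_apply, Matrix.of_apply, ite_zero_mul_ite_zero]
  rw [Fin.sum_univ_eq_sum_range (fun u => if u ≤ (t : ℕ) ∧ (s : ℕ) ≤ u then
    coeff (t - u) f * coeff (u - s) g else 0), ← sum_filter]
  have ht := t.isLt
  split_ifs with hst
  · have hIco : {u ∈ range n | u ≤ (t : ℕ) ∧ (s : ℕ) ≤ u} = Ico (s : ℕ) (t + 1) := by
      ext u
      simp only [mem_filter, mem_range, mem_Ico]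
      omega
    rw [hIco, sum_Ico_eq_sum_range, mul_comm f, coeff_mul,
      Nat.sum_antidiagonal_eq_sum_range_succ (fun p q => coeff p g * coeff q f)]
    refine sum_congr (by congr 1; omega) fun k _ => ?_
    rw [mul_comm, Nat.add_sub_cancel_left, Nat.sub_add_eq]
  · refine sum_eq_zero fun u hu => ?_
    simp only [mem_filter] at hu
    omega

theorem lowerToeplitz_one (n : ℕ) : lowerToeplitz (1 : R⟦X⟧) n = 1 := by
  ext t s
  simp only [lowerToeplitz, Matrix.of_apply, coeff_one, Matrix.one_apply, Fin.ext_iff]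
  split_ifs <;> simp_all; omega

theorem det_lowerToeplitz (f : R⟦X⟧) (n : ℕ) :
    (lowerToeplitz f n).det = constantCoeff f ^ n := by
  rw [Matrix.det_of_isLowerTriangular]
  · simp [lowerToeplitz]
  · intro t s hts
    simp only [lowerToeplitz, Matrix.of_apply]
    exact if_neg (not_le.2 hts)

theorem det_lowerToeplitz_submatrix_succ_castSucc {f g : R⟦X⟧} (hfg : f * g = 1)
    (hf : constantCoeff f = 1) (n : ℕ) :
    ((lowerToeplitz f (n + 1)).submatrix Fin.succ Fin.castSucc).det = (-1) ^ n * coeff n g := by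
  set T := lowerToeplitz f (n + 1) with hT
  have hadj : T.adjugate = lowerToeplitz g (n + 1) := calc
    _ = T.adjugate * (T * lowerToeplitz g (n + 1)) := by
      rw [hT, lowerToeplitz_mul, hfg, lowerToeplitz_one, mul_one]
    _ = lowerToeplitz g (n + 1) := by
      rw [← mul_assoc, Matrix.adjugate_mul, hT, det_lowerToeplitz, hf, one_pow, one_smul, one_mul]
  have hcorner := congr_fun₂ hadj (Fin.last n) 0
  have hg : lowerToeplitz g (n + 1) (Fin.last n) 0 = coeff n g := by simp [lowerToeplitz]
  rw [Matrix.adjugate_fin_succ_eq_det_submatrix, Fin.succAbove_zero, Fin.succAbove_last, hg,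
    Fin.val_zero, Fin.val_last, zero_add] at hcorner
  rw [← hcorner, ← mul_assoc, ← mul_pow, neg_one_mul, neg_neg, one_pow, one_mul]

end PowerSeries

open PowerSeries Nat

theorem alphaEnt_add_two_mul (i k l : ℕ) :
    alphaEnt (i + 2 * k) (i + 2 * l) =
      if l ≤ k then
        (i + 2 * k)! * coeff (k - l) (rescale (-2⁻¹ : ℝ) (exp ℝ)) / (i + 2 * l)!
      else 0 := by
  rw [alphaEnt]
  by_cases hlk : l ≤ k
  · rw [if_pos (by omega), if_pos hlk, show (i + 2 * k - (i + 2 * l)) / 2 = k - l by omega,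
      coeff_rescale, coeff_exp]
    simp only [one_div, map_inv₀, map_natCast, inv_pow, neg_pow (2⁻¹ : ℝ)]
    field_simp
  · rw [if_neg (by omega), if_neg hlk]

theorem det_alphaEnt_matrix (i n : ℕ) :
    (Matrix.of fun t s : Fin n => alphaEnt (i + 2 * ((t : ℕ) + 1)) (i + 2 * (s : ℕ))).det =
      (-1 : ℝ) ^ n * (i + 2 * n)! / (n ! * i ! * 2 ^ n) := by
  set F : ℕ → ℝ := fun k => ((i + 2 * k)! : ℝ) with hF
  set H :=
    (lowerToeplitz (rescale (-2⁻¹ : ℝ) (exp ℝ)) (n + 1)).submatrix Fin.succ Fin.castSucc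
  have hscale :
      (Matrix.of fun t s : Fin n => alphaEnt (i + 2 * ((t : ℕ) + 1)) (i + 2 * (s : ℕ))) =
        Matrix.of fun t s : Fin n =>
          (F s)⁻¹ * Matrix.of (fun (t s : Fin n) => F (t + 1) * H t s) t s := by
    ext t s
    simp only [H, F, Matrix.of_apply, Matrix.submatrix_apply, lowerToeplitz, alphaEnt_add_two_mul,
      Fin.val_succ, Fin.val_castSucc]
    split_ifs <;> ring
  have hinv : rescale (-2⁻¹ : ℝ) (exp ℝ) * rescale 2⁻¹ (exp ℝ) = 1 := by
    rw [exp_mul_exp_eq_exp_add, neg_add_cancel, rescale_zero_apply, constantCoeff_exp, map_one]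
  have htel : (∏ k ∈ range n, F (k + 1)) * F 0 = (∏ k ∈ range n, F k) * F n :=
    (prod_range_succ' F n).symm.trans (prod_range_succ F n)
  have hprod : (∏ k ∈ range n, F k) ≠ 0 := prod_ne_zero_iff.2 fun k _ => by positivity
  rw [hscale, Matrix.det_mul_row, Matrix.det_mul_column,
    det_lowerToeplitz_submatrix_succ_castSucc hinv
      (by simp [← coeff_zero_eq_constantCoeff_apply]),
    Fin.prod_univ_eq_prod_range (fun k => (F k)⁻¹),
    Fin.prod_univ_eq_prod_range (fun k => F (k + 1)), prod_inv_distrib]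
  simp only [coeff_rescale, coeff_exp, one_div, map_inv₀, map_natCast, inv_pow]
  field_simp
  simp only [hF, mul_zero, add_zero] at htel ⊢
  linear_combination htel

/-- Determinant of the matrix with rows indexed by `{i+2, i+4, …, b}`, columns indexed by
`{i, i+2, …, b-2}`, and entries `α(r,c)`. -/
theorem det_alpha_lower_triangular (i b : ℕ) (hi : Even i) (hb : Even b) (hib : i + 2 ≤ b) :
    (Matrix.of fun t s : Fin ((b - i) / 2) =>
        alphaEnt (i + 2 * ((t : ℕ) + 1)) (i + 2 * (s : ℕ))).det =
      (-1 : ℝ) ^ ((b - i) / 2) * (Nat.factorial b) /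
        ((Nat.factorial ((b - i) / 2)) * (Nat.factorial i) * 2 ^ ((b - i) / 2)) := by
  obtain ⟨n, rfl⟩ : ∃ n, b = i + 2 * n := by
    obtain ⟨x, rfl⟩ := hi
    obtain ⟨y, rfl⟩ := hb
    exact ⟨y - x, by omega⟩
  rw [show (i + 2 * n - i) / 2 = n by omega]
  exact det_alphaEnt_matrix i n
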